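/- arXiv:1912.11116 — 12 statements merged into one kernel-verified Lean document; each statement's English description precedes it below -/
import Mathlib

section
/- Let (x_n) be a sequence in a field satisfying x_n·x_{n+2k+l} = x_{n+2k}·x_{n+l} + x_{n+k} + x_{n+k+l} for all n (with all x_n nonzero), and define z_n = x_n + x_{n+l}. Then z_n·x_{n+2k+l} = x_{n+l}·z_{n+2k} + z_{n+k} for all n. -/
theorem littlepi_z_identity_1_general {F : Type*} [Field F] (k l : ℤ)
    (x : ℤ → F)
    (hrec : ∀ n : ℤ, x n * x (n + 2*k + l) = x (n + 2*k) * x (n + l) + x (n + k) + x (n + k + l))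
    (z : ℤ → F) (hz : ∀ n, z n = x n + x (n + l)) :
    ∀ n : ℤ, z n * x (n + 2*k + l) = x (n + l) * z (n + 2*k) + z (n + k) := by
  intro n
  simp only [hz]
  linear_combination hrec n

theorem littlepi_z_identity_1 {F : Type*} [Field F] (k l : ℤ) (hk : 0 < k) (hl : 0 < l)
    (x : ℤ → F) (hx : ∀ n, x n ≠ 0)
    (hrec : ∀ n : ℤ, x n * x (n + 2*k + l) = x (n + 2*k) * x (n + l) + x (n + k) + x (n + k + l))
    (z : ℤ → F) (hz : ∀ n, z n = x n + x (n + l)) :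
    ∀ n : ℤ, z n * x (n + 2*k + l) = x (n + l) * z (n + 2*k) + z (n + k) :=
  littlepi_z_identity_1_general k l x hrec z hz
end

section
/- Let (x_n) be a sequence of nonzero field elements satisfying the Little Pi recurrence. Define δ_n to be the 3×3 determinant with rows (x_n, x_{n+2k}, x_{n+4k}), (x_{n+l}, x_{n+2k+l}, x_{n+4k+l}), (x_{n+2l}, x_{n+2k+2l}, x_{n+4k+2l}). Then x_{n+2k+l}·δ_n equals the 2×2 determinant with rows (z_{n+k}, z_{n+3k}), (z_{n+k+l}, z_{n+3k+l}), where z_m = x_m + x_{m+l}. -/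
/-!
The recurrence says exactly that every 2 × 2 minor
`x n * x (n + 2k + l) - x (n + 2k) * x (n + l)` equals `z (n + k)`. The four connected 2 × 2
minors of the 3 × 3 matrix are of this shape, so the identity is the Desnanot–Jacobi
(Dodgson condensation) identity for that matrix.
-/

theorem Matrix.mul_det_fin_three_eq_det_connected_minors {R : Type*} [CommRing R]
    (a b c d e f g h i : R) :
    e * !![a, b, c; d, e, f; g, h, i].det =
      !![!![a, b; d, e].det, !![b, c; e, f].det; !![d, e; g, h].det, !![e, f; h, i].det].det := by
  simp only [Matrix.det_fin_three, Matrix.det_fin_two_of, Matrix.of_apply, Matrix.cons_val',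
    Matrix.cons_val_zero, Matrix.cons_val_one, Matrix.cons_val_two, Matrix.head_cons,
    Matrix.tail_cons, Matrix.cons_val_fin_one, Matrix.head_fin_const]
  ring

theorem det_littlePi_minor {F : Type*} [CommRing F] {k l : ℤ} {x z : ℤ → F}
    (hrec : ∀ n : ℤ, x n * x (n + 2*k + l) = x (n + 2*k) * x (n + l) + x (n + k) + x (n + k + l))
    (hz : ∀ n, z n = x n + x (n + l)) (n : ℤ) :
    !![x n, x (n + 2*k); x (n + l), x (n + 2*k + l)].det = z (n + k) := by
  rw [Matrix.det_fin_two_of, hrec, hz]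
  ring

theorem littlepi_condensation_general {F : Type*} [Field F] (k l : ℤ)
    (x : ℤ → F)
    (hrec : ∀ n : ℤ, x n * x (n + 2*k + l) = x (n + 2*k) * x (n + l) + x (n + k) + x (n + k + l))
    (z : ℤ → F) (hz : ∀ n, z n = x n + x (n + l)) :
    ∀ n : ℤ,
      x (n + 2*k + l) *
        (Matrix.det !![x n, x (n + 2*k), x (n + 4*k);
                       x (n + l), x (n + 2*k + l), x (n + 4*k + l);
                       x (n + 2*l), x (n + 2*k + 2*l), x (n + 4*k + 2*l)]) =
      Matrix.det !![z (n + k), z (n + 3*k);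
                    z (n + k + l), z (n + 3*k + l)] := by
  intro n
  have h₁ := det_littlePi_minor hrec hz n
  have h₂ := det_littlePi_minor hrec hz (n + 2*k)
  have h₃ := det_littlePi_minor hrec hz (n + l)
  have h₄ := det_littlePi_minor hrec hz (n + 2*k + l)
  rw [Matrix.mul_det_fin_three_eq_det_connected_minors]
  -- `ring_nf` brings shifted indices such as `n + 2*k + 2*k` and `n + 4*k` to a common form.
  ring_nf at h₁ h₂ h₃ h₄ ⊢
  rw [h₁, h₂, h₃, h₄]

theorem littlepi_condensation {F : Type*} [Field F] (k l : ℤ) (hk : 0 < k) (hl : 0 < l)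
    (x : ℤ → F) (hx : ∀ n, x n ≠ 0)
    (hrec : ∀ n : ℤ, x n * x (n + 2*k + l) = x (n + 2*k) * x (n + l) + x (n + k) + x (n + k + l))
    (z : ℤ → F) (hz : ∀ n, z n = x n + x (n + l)) :
    ∀ n : ℤ,
      x (n + 2*k + l) *
        (Matrix.det !![x n, x (n + 2*k), x (n + 4*k);
                       x (n + l), x (n + 2*k + l), x (n + 4*k + l);
                       x (n + 2*l), x (n + 2*k + 2*l), x (n + 4*k + 2*l)]) =
      Matrix.det !![z (n + k), z (n + 3*k);
                    z (n + k + l), z (n + 3*k + l)] :=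
  littlepi_condensation_general k l x hrec z hz
end

section
/- Let (x_n) be a sequence of nonzero field elements satisfying the Little Pi recurrence, and let δ_n be the 3×3 Casorati determinant det[[x_n, x_{n+2k}, x_{n+4k}],[x_{n+l}, x_{n+2k+l}, x_{n+4k+l}],[x_{n+2l}, x_{n+2k+2l}, x_{n+4k+2l}]]. Then δ_{n+k} = δ_n for all n, i.e. δ is periodic with period k. -/
/-!
Write `M_m = x_m x_{m+2k+l} - x_{m+2k} x_{m+l}` for the `2 × 2` Casorati minors; the recurrence
says `M_m = x_{m+k} + x_{m+k+l}`. Desnanot–Jacobi condensation of the `3 × 3` determinant around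
its centre gives `δ_m x_{m+2k+l} = M_m M_{m+2k+l} - M_{m+2k} M_{m+l}`, i.e. the `2 × 2` minor of the
sequence `M` itself. Expanding that minor by bilinearity and applying a three-term Plücker relation
to the leftover minor of rows `0, 2`, one finds, with `v_j = (x_j, x_{j+l}, x_{j+2l})` and `β` the
symmetric bilinear form of Gram matrix `[[0,1,1],[1,2,1],[1,1,0]]`,
`δ_m x_{m+k+l} x_{m+2k+l} = β(v_{m+k}, v_{m+2k})` and `δ_m x_{m+2k+l} x_{m+3k+l} = β(v_{m+3k}, v_{m+2k})`.
By the symmetry of `β`, `δ_{n+k}` and `δ_n` thus agree after multiplication by the nonzero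
`x_{n+2k+l} x_{n+3k+l}`.
-/

theorem Matrix.desnanot_jacobi_fin_three {R : Type*} [CommRing R] (A : Matrix (Fin 3) (Fin 3) R) :
    A.det * A 1 1 = (A 0 0 * A 1 1 - A 0 1 * A 1 0) * (A 1 1 * A 2 2 - A 1 2 * A 2 1)
      - (A 0 1 * A 1 2 - A 0 2 * A 1 1) * (A 1 0 * A 2 1 - A 1 1 * A 2 0) := by
  rw [Matrix.det_fin_three]
  ring

namespace LittlePi

variable {R : Type*} [CommRing R] (k l : ℤ) (x : ℤ → R)

def IsSolution : Prop :=
  ∀ n : ℤ, x n * x (n + 2*k + l) = x (n + 2*k) * x (n + l) + x (n + k) + x (n + k + l)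

def casorati (n : ℤ) : Matrix (Fin 3) (Fin 3) R :=
  !![x n, x (n + 2*k), x (n + 4*k);
     x (n + l), x (n + 2*k + l), x (n + 4*k + l);
     x (n + 2*l), x (n + 2*k + 2*l), x (n + 4*k + 2*l)]

def minor (m : ℤ) : R :=
  x m * x (m + 2*k + l) - x (m + 2*k) * x (m + l)

def shiftSum (m : ℤ) : R :=
  x (m + k) + x (m + k + l)

/-- `β(v_i, v_j)`, with `v_j = (x j, x (j + l), x (j + 2l))`. -/
def pairing (i j : ℤ) : R :=
  x i * (x (j + l) + x (j + 2*l)) + x (i + l) * (x j + 2 * x (j + l) + x (j + 2*l))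
    + x (i + 2*l) * (x j + x (j + l))

variable {k l x}

theorem pairing_comm (i j : ℤ) : pairing l x i j = pairing l x j i := by
  unfold pairing
  ring

theorem det_casorati_mul (m : ℤ) :
    (casorati k l x m).det * x (m + 2*k + l) =
      minor k l x m * minor k l x (m + 2*k + l) - minor k l x (m + 2*k) * minor k l x (m + l) := by
  rw [show x (m + 2*k + l) = casorati k l x m 1 1 from rfl, Matrix.desnanot_jacobi_fin_three]
  simp only [casorati, minor, Matrix.of_apply, Matrix.cons_val', Matrix.cons_val_zero,
    Matrix.cons_val_fin_one, Matrix.cons_val_one, Matrix.cons_val]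
  ring_nf

theorem IsSolution.minor_eq (h : IsSolution k l x) : minor k l x = shiftSum k l x := by
  funext m
  unfold minor shiftSum
  linear_combination h m

theorem IsSolution.det_casorati_mul_left (h : IsSolution k l x) (m : ℤ) :
    (casorati k l x m).det * (x (m + k + l) * x (m + 2*k + l)) = pairing l x (m + k) (m + 2*k) := by
  rw [mul_comm (x _), ← mul_assoc, det_casorati_mul, h.minor_eq]
  unfold shiftSum pairing
  linear_combination (norm := ring_nf)
    (x (m + k + l) + x (m + k + 2*l)) * h (m + k) + (x (m + k) + x (m + k + l)) * h (m + k + l)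

theorem IsSolution.det_casorati_mul_right (h : IsSolution k l x) (m : ℤ) :
    (casorati k l x m).det * (x (m + 2*k + l) * x (m + 3*k + l)) =
      pairing l x (m + 3*k) (m + 2*k) := by
  rw [← mul_assoc, det_casorati_mul, h.minor_eq]
  unfold shiftSum pairing
  linear_combination (norm := ring_nf)
    (x (m + 3*k + l) + x (m + 3*k + 2*l)) * h (m + k)
      + (x (m + 3*k + l) + x (m + 3*k)) * h (m + k + l)

theorem IsSolution.det_casorati_add_mul (h : IsSolution k l x) (n : ℤ) :
    (casorati k l x (n + k)).det * (x (n + 2*k + l) * x (n + 3*k + l)) =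
      (casorati k l x n).det * (x (n + 2*k + l) * x (n + 3*k + l)) := by
  have hleft := h.det_casorati_mul_left (n + k)
  rw [show n + k + k = n + 2*k by ring, show n + k + 2*k = n + 3*k by ring] at hleft
  rw [hleft, pairing_comm, h.det_casorati_mul_right]

end LittlePi

theorem littlepi_delta_periodic_general {F : Type*} [Field F] (k l : ℤ)
    (x : ℤ → F) (hx : ∀ n, x n ≠ 0)
    (hrec : ∀ n : ℤ, x n * x (n + 2*k + l) = x (n + 2*k) * x (n + l) + x (n + k) + x (n + k + l))
    (δ : ℤ → F)
    (hδ : ∀ n, δ n = Matrix.det !![x n, x (n + 2*k), x (n + 4*k);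
                                    x (n + l), x (n + 2*k + l), x (n + 4*k + l);
                                    x (n + 2*l), x (n + 2*k + 2*l), x (n + 4*k + 2*l)]) :
    ∀ n : ℤ, δ (n + k) = δ n := by
  intro n
  rw [hδ, hδ]
  exact mul_right_cancel₀ (mul_ne_zero (hx _) (hx _))
    (LittlePi.IsSolution.det_casorati_add_mul hrec n)

theorem littlepi_delta_periodic {F : Type*} [Field F] (k l : ℤ) (hk : 0 < k) (hl : 0 < l)
    (x : ℤ → F) (hx : ∀ n, x n ≠ 0)
    (hrec : ∀ n : ℤ, x n * x (n + 2*k + l) = x (n + 2*k) * x (n + l) + x (n + k) + x (n + k + l))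
    (δ : ℤ → F)
    (hδ : ∀ n, δ n = Matrix.det !![x n, x (n + 2*k), x (n + 4*k);
                                    x (n + l), x (n + 2*k + l), x (n + 4*k + l);
                                    x (n + 2*l), x (n + 2*k + 2*l), x (n + 4*k + 2*l)]) :
    ∀ n : ℤ, δ (n + k) = δ n :=
  littlepi_delta_periodic_general k l x hx hrec δ hδ
end

section
/- Let (x_n) be a sequence of positive real numbers satisfying the Little Pi recurrence x_n·x_{n+2k+l} = x_{n+2k}·x_{n+l} + x_{n+k} + x_{n+k+l}. Then the 3×3 determinant δ_n = det[[x_n, x_{n+2k}, x_{n+4k}],[x_{n+l}, x_{n+2k+l}, x_{n+4k+l}],[x_{n+2l}, x_{n+2k+2l}, x_{n+4k+2l}]] is nonzero for every n. -/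
/-!
Index the sequence by the lattice `ℤ²` through `y i j = x (n + i k + j l)`; the recurrence then reads
`y i j · y (i+2) (j+1) = y (i+2) j · y i (j+1) + y (i+1) j + y (i+1) (j+1)`. Expanding `δ_n` and
eliminating with six instances of this relation gives the polynomial identity
`δ_n · x_{n+k+l} x_{n+2k+l} = z_{n+k} z_{n+2k+l} + z_{n+2k} z_{n+k+l}` with `z_m = x_m + x_{m+l}`.
For a positive sequence the right-hand side is positive, so `δ_n ≠ 0`.
-/

section

variable {R : Type*} [CommRing R]

theorem littlePi_recurrence_on_lattice {x : ℤ → R} {k l : ℤ}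
    (hrec : ∀ n : ℤ, x n * x (n + 2*k + l) = x (n + 2*k) * x (n + l) + x (n + k) + x (n + k + l))
    (n i j : ℤ) :
    x (n + i*k + j*l) * x (n + (i+2)*k + (j+1)*l) =
      x (n + (i+2)*k + j*l) * x (n + i*k + (j+1)*l) + x (n + (i+1)*k + j*l)
        + x (n + (i+1)*k + (j+1)*l) := by
  have h := hrec (n + i*k + j*l)
  rwa [show n + i*k + j*l + 2*k + l = n + (i+2)*k + (j+1)*l by ring,
    show n + i*k + j*l + k + l = n + (i+1)*k + (j+1)*l by ring,
    show n + i*k + j*l + 2*k = n + (i+2)*k + j*l by ring,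
    show n + i*k + j*l + l = n + i*k + (j+1)*l by ring,
    show n + i*k + j*l + k = n + (i+1)*k + j*l by ring] at h

theorem littlePi_det_mul_eq {y : ℤ → ℤ → R}
    (hy : ∀ i j, y i j * y (i+2) (j+1) = y (i+2) j * y i (j+1) + y (i+1) j + y (i+1) (j+1)) :
    Matrix.det !![y 0 0, y 2 0, y 4 0; y 0 1, y 2 1, y 4 1; y 0 2, y 2 2, y 4 2] * (y 1 1 * y 2 1) =
      (y 1 0 + y 1 1) * (y 2 1 + y 2 2) + (y 2 0 + y 2 1) * (y 1 1 + y 1 2) := by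
  have h00 := hy 0 0
  have h01 := hy 0 1
  have h10 := hy 1 0
  have h11 := hy 1 1
  have h20 := hy 2 0
  have h21 := hy 2 1
  norm_num at h00 h01 h10 h11 h20 h21
  rw [Matrix.det_fin_three]
  simp only [Matrix.of_apply, Matrix.cons_val', Matrix.cons_val_zero, Matrix.cons_val_one,
    Matrix.cons_val_two, Matrix.empty_val', Matrix.cons_val_fin_one, Matrix.head_cons,
    Matrix.tail_cons, Matrix.head_fin_const]
  linear_combination
    (y 1 1 * y 2 1 * y 4 2 - y 1 1 * y 2 2 * y 4 1) * h00
      + (y 1 1 * y 2 1 * y 4 0 - y 1 1 * y 2 0 * y 4 1) * h01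
      + (y 1 1 + y 1 2) * h10 + (y 1 0 + y 1 1) * h11
      - (y 1 1 * y 1 1 + y 1 1 * y 1 2) * h20 + (y 1 0 * y 1 1 + y 1 1 * y 1 1) * h21

end

theorem littlepi_delta_nonzero_general (k l : ℤ)
    (x : ℤ → ℝ) (hx : ∀ n, 0 < x n)
    (hrec : ∀ n : ℤ, x n * x (n + 2*k + l) = x (n + 2*k) * x (n + l) + x (n + k) + x (n + k + l)) :
    ∀ n : ℤ,
      Matrix.det !![x n, x (n + 2*k), x (n + 4*k);
                    x (n + l), x (n + 2*k + l), x (n + 4*k + l);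
                    x (n + 2*l), x (n + 2*k + 2*l), x (n + 4*k + 2*l)] ≠ 0 := by
  intro n hδ
  have key := littlePi_det_mul_eq (littlePi_recurrence_on_lattice hrec n)
  simp only [zero_mul, one_mul, add_zero] at key
  rw [hδ, zero_mul] at key
  have hz : ∀ a b, 0 < x a + x b := fun a b => add_pos (hx a) (hx b)
  exact (add_pos (mul_pos (hz _ _) (hz _ _)) (mul_pos (hz _ _) (hz _ _))).ne key

theorem littlepi_delta_nonzero (k l : ℤ) (hk : 0 < k) (hl : 0 < l)
    (x : ℤ → ℝ) (hx : ∀ n, 0 < x n)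
    (hrec : ∀ n : ℤ, x n * x (n + 2*k + l) = x (n + 2*k) * x (n + l) + x (n + k) + x (n + k + l)) :
    ∀ n : ℤ,
      Matrix.det !![x n, x (n + 2*k), x (n + 4*k);
                    x (n + l), x (n + 2*k + l), x (n + 4*k + l);
                    x (n + 2*l), x (n + 2*k + 2*l), x (n + 4*k + 2*l)] ≠ 0 :=
  littlepi_delta_nonzero_general k l x hx hrec
end

section
/- Suppose a sequence (x_n) of positive reals satisfies the Little Pi recurrence, and suppose there exist sequences (K⁽²⁾_n), (K⁽³⁾_n), each periodic with period l, such that x_{n+6k} + K⁽³⁾_n·x_{n+4k} + K⁽²⁾_n·x_{n+2k} − x_n = 0 for all n, and such that the 2×2 determinant det[[z_{n+3k}, z_{n+3k+l}],[z_{n+5k}, z_{n+5k+l}]] is nonzero for all n (where z_m = x_m + x_{m+l}). Then K⁽²⁾_{n+k} = −K⁽³⁾_n for all n. -/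
/-!
With `v m = (x m, x (m + l))`, the recurrence says `det (v n, v (n + 2k)) = z (n + k)`, and by
`l`-periodicity of the coefficients the linear relation holds for `v`, hence for `z`. Expanding
`det (v n, v (n + 2k))` by the relation at `n` in the first vector and at `n + 2k` in the second
gives `z (n + k) = z (n + 7k) - K₂ (n + 2k) z (n + 5k) - K₃ n z (n + 3k)`; subtracting the
relation for `z` at `n + k` leaves
`(K₃ n + K₂ (n + k)) z (n + 3k) + (K₃ (n + k) + K₂ (n + 2k)) z (n + 5k) = 0`.
The same identity at `n + l` has the same coefficients, so the nonzero determinant forces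
`K₃ n + K₂ (n + k) = 0`.
-/

open Matrix

namespace LittlePi

variable {R : Type*} [CommRing R]

lemma left_coeff_eq_zero_of_det_ne_zero {a b p p' q q' : R} [NoZeroDivisors R]
    (hdet : !![p, p'; q, q'].det ≠ 0) (h : a * p + b * q = 0) (h' : a * p' + b * q' = 0) :
    a = 0 := by
  have hv : ![a, b] ᵥ* !![p, p'; q, q'] = 0 := by
    ext i; fin_cases i <;> simpa [Matrix.vecMul, dotProduct, Fin.sum_univ_two]
  simpa using congrFun (Matrix.eq_zero_of_vecMul_eq_zero hdet hv) 0

def SatisfiesLinRec (k : ℤ) (K2 K3 y : ℤ → R) : Prop :=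
  ∀ n, y (n + 6*k) + K3 n * y (n + 4*k) + K2 n * y (n + 2*k) - y n = 0

variable {k l : ℤ} {K2 K3 y w : ℤ → R}

lemma SatisfiesLinRec.add (hy : SatisfiesLinRec k K2 K3 y) (hw : SatisfiesLinRec k K2 K3 w) :
    SatisfiesLinRec k K2 K3 (y + w) := fun n => by
  simp only [Pi.add_apply]; linear_combination hy n + hw n

lemma SatisfiesLinRec.comp_add_right (hy : SatisfiesLinRec k K2 K3 y)
    (hK2 : Function.Periodic K2 l) (hK3 : Function.Periodic K3 l) :
    SatisfiesLinRec k K2 K3 (fun n => y (n + l)) := fun n => by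
  simpa only [add_right_comm n l, hK2 n, hK3 n] using hy (n + l)

-- `pairDet y l a b = det !![y a, y (a + l); y b, y (b + l)]`
def pairDet (y : ℤ → R) (l a b : ℤ) : R := y a * y (b + l) - y b * y (a + l)

lemma pairDet_self (y : ℤ → R) (l a : ℤ) : pairDet y l a a = 0 := sub_self _

lemma pairDet_comm (y : ℤ → R) (l a b : ℤ) : pairDet y l b a = -pairDet y l a b := by
  unfold pairDet; ring

lemma pairDet_of_linRec (hy : SatisfiesLinRec k K2 K3 y)
    (hyl : SatisfiesLinRec k K2 K3 (fun n => y (n + l))) (n b : ℤ) :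
    pairDet y l n b = pairDet y l (n + 6*k) b + K3 n * pairDet y l (n + 4*k) b
      + K2 n * pairDet y l (n + 2*k) b := by
  unfold pairDet
  linear_combination y b * hyl n - y (b + l) * hy n

lemma pairDet_of_linRec_right (hy : SatisfiesLinRec k K2 K3 y)
    (hyl : SatisfiesLinRec k K2 K3 (fun n => y (n + l))) (a n : ℤ) :
    pairDet y l a n = pairDet y l a (n + 6*k) + K3 n * pairDet y l a (n + 4*k)
      + K2 n * pairDet y l a (n + 2*k) := by
  unfold pairDet
  linear_combination y (a + l) * hy n - y a * hyl n

variable {x z : ℤ → R}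

lemma linRec_coeff_combination_eq_zero (hx : SatisfiesLinRec k K2 K3 x)
    (hxl : SatisfiesLinRec k K2 K3 (fun n => x (n + l))) (hz : SatisfiesLinRec k K2 K3 z)
    (hrec : ∀ n, pairDet x l n (n + 2*k) = z (n + k)) (n : ℤ) :
    (K3 n + K2 (n + k)) * z (n + 3*k) + (K3 (n + k) + K2 (n + 2*k)) * z (n + 5*k) = 0 := by
  have hrec_swap : ∀ m, pairDet x l (m + 2*k) m = -z (m + k) := fun m => by
    rw [pairDet_comm, hrec]
  have hleft : z (n + k) = pairDet x l (n + 6*k) (n + 2*k) - K3 n * z (n + 3*k) := by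
    rw [← hrec, pairDet_of_linRec hx hxl n, pairDet_self]
    linear_combination (norm := ring_nf) K3 n * hrec_swap (n + 2*k)
  have hright : pairDet x l (n + 6*k) (n + 2*k) = z (n + 7*k) - K2 (n + 2*k) * z (n + 5*k) := by
    rw [pairDet_of_linRec_right hx hxl]
    linear_combination (norm := ring_nf) hrec (n + 6*k) + K2 (n + 2*k) * hrec_swap (n + 4*k)
      + K3 (n + 2*k) * pairDet_self x l (n + 6*k)
  linear_combination (norm := ring_nf) hleft + hright + hz (n + k)

end LittlePi

open LittlePi

theorem littlepi_coefficient_relation_general (k l : ℤ)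
    (x : ℤ → ℝ)
    (hrec : ∀ n : ℤ, x n * x (n + 2*k + l) = x (n + 2*k) * x (n + l) + x (n + k) + x (n + k + l))
    (z : ℤ → ℝ) (hz : ∀ n, z n = x n + x (n + l))
    (K2 K3 : ℤ → ℝ)
    (hK2per : ∀ n, K2 (n + l) = K2 n) (hK3per : ∀ n, K3 (n + l) = K3 n)
    (hlin : ∀ n : ℤ, x (n + 6*k) + K3 n * x (n + 4*k) + K2 n * x (n + 2*k) - x n = 0)
    (hdet : ∀ n : ℤ, Matrix.det !![z (n + 3*k), z (n + 3*k + l);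
                                    z (n + 5*k), z (n + 5*k + l)] ≠ 0) :
    ∀ n : ℤ, K2 (n + k) = -K3 n := by
  have hx : SatisfiesLinRec k K2 K3 x := hlin
  have hxl := hx.comp_add_right hK2per hK3per
  have hzx : z = x + fun n => x (n + l) := funext hz
  have hE := linRec_coeff_combination_eq_zero hx hxl (hzx ▸ hx.add hxl) fun n => by
    rw [pairDet, hz, hrec]; ring
  intro n
  have hEl := hE (n + l)
  simp only [add_right_comm n l, hK2per, hK3per] at hEl
  exact eq_neg_of_add_eq_zero_right (left_coeff_eq_zero_of_det_ne_zero (hdet n) (hE n) hEl)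

theorem littlepi_coefficient_relation (k l : ℤ) (hk : 0 < k) (hl : 0 < l)
    (x : ℤ → ℝ) (hx : ∀ n, 0 < x n)
    (hrec : ∀ n : ℤ, x n * x (n + 2*k + l) = x (n + 2*k) * x (n + l) + x (n + k) + x (n + k + l))
    (z : ℤ → ℝ) (hz : ∀ n, z n = x n + x (n + l))
    (K2 K3 : ℤ → ℝ)
    (hK2per : ∀ n, K2 (n + l) = K2 n) (hK3per : ∀ n, K3 (n + l) = K3 n)
    (hlin : ∀ n : ℤ, x (n + 6*k) + K3 n * x (n + 4*k) + K2 n * x (n + 2*k) - x n = 0)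
    (hdet : ∀ n : ℤ, Matrix.det !![z (n + 3*k), z (n + 3*k + l);
                                    z (n + 5*k), z (n + 5*k + l)] ≠ 0) :
    ∀ n : ℤ, K2 (n + k) = -K3 n :=
  littlepi_coefficient_relation_general k l x hrec z hz K2 K3 hK2per hK3per hlin hdet
end

section
/- Let (u_{s,t}) be a family of nonzero field elements satisfying the lattice equation (u_{s+1,t+2} + u_{s+1,t} + a)·u_{s,t+1} = (u_{s,t+2} + u_{s,t} + a)·u_{s+1,t+1}. Then for each t there exists J(t) (independent of s) such that u_{s,t+3} − (J(t+1)+1)·u_{s,t+2} + (J(t)+1)·u_{s,t+1} − u_{s,t} = 0 for all s. -/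
/-!
Dividing the lattice equation by `u s (t+1) * u (s+1) (t+1)` shows that the ratio
`(u s (t+2) + u s t + a) / u s (t+1)` does not change from row `s` to row `s + 1`, so it is a
function `J t` of `t` alone. Each row then satisfies the second-order relation
`J t * u s (t+1) = u s (t+2) + u s t + a`, and subtracting this relation at `t` from the one at
`t + 1` eliminates `a` and gives the linear third-order relation.
-/

section

variable {F : Type*} [Field F]

def latticeRatio (a : F) (u : ℤ → ℤ → F) (s t : ℤ) : F :=
  (u s (t + 2) + u s t + a) / u s (t + 1)

theorem latticeRatio_periodic {a : F} {u : ℤ → ℤ → F} (hu : ∀ s t, u s t ≠ 0)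
    (hlat : ∀ s t : ℤ, (u (s+1) (t+2) + u (s+1) t + a) * u s (t+1)
        = (u s (t+2) + u s t + a) * u (s+1) (t+1)) (t : ℤ) :
    Function.Periodic (fun s => latticeRatio a u s t) 1 := fun s => by
  simp only [latticeRatio]
  rw [div_eq_div_iff (hu _ _) (hu _ _)]
  exact hlat s t

theorem latticeRatio_eq_latticeRatio_zero {a : F} {u : ℤ → ℤ → F} (hu : ∀ s t, u s t ≠ 0)
    (hlat : ∀ s t : ℤ, (u (s+1) (t+2) + u (s+1) t + a) * u s (t+1)
        = (u s (t+2) + u s t + a) * u (s+1) (t+1)) (s t : ℤ) :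
    latticeRatio a u s t = latticeRatio a u 0 t := by
  simpa using (latticeRatio_periodic hu hlat t).int_mul_eq s

theorem third_order_relation_of_second_order {R : Type*} [CommRing R] {a : R} {v J : ℤ → R}
    (hv : ∀ t, J t * v (t + 1) = v (t + 2) + v t + a) (t : ℤ) :
    v (t + 3) - (J (t + 1) + 1) * v (t + 2) + (J t + 1) * v (t + 1) - v t = 0 := by
  have hnext := hv (t + 1)
  rw [show t + 1 + 1 = t + 2 by ring, show t + 1 + 2 = t + 3 by ring] at hnext
  linear_combination hv t - hnext

end

theorem lattice_linear_relation_t {F : Type*} [Field F] (a : F)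
    (u : ℤ → ℤ → F) (hu : ∀ s t, u s t ≠ 0)
    (hlat : ∀ s t : ℤ, (u (s+1) (t+2) + u (s+1) t + a) * u s (t+1)
        = (u s (t+2) + u s t + a) * u (s+1) (t+1)) :
    ∃ J : ℤ → F, ∀ s t : ℤ,
      u s (t+3) - (J (t+1) + 1) * u s (t+2) + (J t + 1) * u s (t+1) - u s t = 0 := by
  refine ⟨latticeRatio a u 0, fun s => third_order_relation_of_second_order (a := a) fun t => ?_⟩
  rw [← latticeRatio_eq_latticeRatio_zero hu hlat s t, latticeRatio,
    div_mul_cancel₀ _ (hu s (t + 1))]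
end

section
/- Let (u_{s,t}) be a family of nonzero field elements satisfying the lattice equation (u_{s+1,t+2} + u_{s+1,t} + a)·u_{s,t+1} = (u_{s,t+2} + u_{s,t} + a)·u_{s+1,t+1}. Then for all s and t the 4×4 Casorati determinant det[[u_{s+i,t+j}]]_{0≤i,j≤3} equals zero. -/
/-!
Dividing the lattice equation by `u s (t+1) * u (s+1) (t+1)` shows that the ratio
`r t = (u s (t+2) + u s t + a) / u s (t+1)` does not depend on `s`. Every row `v = u (s+i)` of the
Casorati matrix therefore obeys the same inhomogeneous recurrence `v (t+2) = r t * v (t+1) - v t - a`,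
and subtracting two consecutive instances removes `a`: the columns satisfy the fixed linear relation
`col t - (1 + r t) col (t+1) + (1 + r (t+1)) col (t+2) - col (t+3) = 0`.
-/

theorem Int.apply_add_eq_of_apply_succ_eq {α : Type*} {f : ℤ → α} (h : ∀ n, f (n + 1) = f n)
    (n k : ℤ) : f (n + k) = f n := by
  induction k using Int.induction_on with
  | zero => rw [add_zero]
  | succ k ih => rw [← add_assoc, h, ih]
  | pred k ih => rw [← ih, ← h, add_sub_assoc', sub_add_cancel]

namespace LatticeCasorati

variable {F : Type*} [Field F]

def ratio (a : F) (u : ℤ → ℤ → F) (s t : ℤ) : F :=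
  (u s (t + 2) + u s t + a) / u s (t + 1)

theorem ratio_succ_left {a : F} {u : ℤ → ℤ → F} (hu : ∀ s t, u s t ≠ 0)
    (hlat : ∀ s t : ℤ, (u (s+1) (t+2) + u (s+1) t + a) * u s (t+1)
        = (u s (t+2) + u s t + a) * u (s+1) (t+1)) (s t : ℤ) :
    ratio a u (s + 1) t = ratio a u s t := by
  rw [ratio, ratio, div_eq_div_iff (hu _ _) (hu _ _)]
  exact hlat s t

theorem add_two_eq_ratio_mul {a : F} {u : ℤ → ℤ → F} (hu : ∀ s t, u s t ≠ 0) (s t : ℤ) :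
    u s (t + 2) = ratio a u s t * u s (t + 1) - u s t - a := by
  rw [ratio, div_mul_cancel₀ _ (hu s (t + 1))]
  ring

theorem linear_relation_of_recurrence {a : F} {v p : ℤ → F}
    (hv : ∀ t, v (t + 2) = p t * v (t + 1) - v t - a) (t : ℤ) :
    v t - (1 + p t) * v (t + 1) + (1 + p (t + 1)) * v (t + 2) - v (t + 3) = 0 := by
  have h₁ := hv (t + 1)
  rw [show t + 1 + 2 = t + 3 by ring, show t + 1 + 1 = t + 2 by ring] at h₁
  linear_combination hv t - h₁

open Matrix in
theorem det_casorati_eq_zero_of_recurrence {a : F} {w : Fin 4 → ℤ → F} {p : ℤ → F}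
    (hw : ∀ i t, w i (t + 2) = p t * w i (t + 1) - w i t - a) (t : ℤ) :
    det (of fun i j : Fin 4 => w i (t + (j : ℤ))) = 0 := by
  rw [← exists_mulVec_eq_zero_iff]
  refine ⟨![1, -(1 + p t), 1 + p (t + 1), -1], fun h => one_ne_zero (congrFun h 0), ?_⟩
  funext i
  simp only [mulVec, dotProduct, Fin.sum_univ_four, of_apply, cons_val, Fin.coe_ofNat_eq_mod,
    Nat.reduceMod, Nat.cast_ofNat, Nat.cast_zero, Nat.cast_one, add_zero, Pi.zero_apply]
  linear_combination linear_relation_of_recurrence (hw i) t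

end LatticeCasorati

open LatticeCasorati in
theorem lattice_casorati_vanishes {F : Type*} [Field F] (a : F)
    (u : ℤ → ℤ → F) (hu : ∀ s t, u s t ≠ 0)
    (hlat : ∀ s t : ℤ, (u (s+1) (t+2) + u (s+1) t + a) * u s (t+1)
        = (u s (t+2) + u s t + a) * u (s+1) (t+1)) :
    ∀ s t : ℤ,
      Matrix.det (Matrix.of fun i j : Fin 4 => u (s + (i : ℤ)) (t + (j : ℤ))) = 0 := by
  intro s t
  have ratio_indep : ∀ (k t' : ℤ), ratio a u (s + k) t' = ratio a u s t' := fun k t' =>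
    Int.apply_add_eq_of_apply_succ_eq (f := fun s' => ratio a u s' t')
      (fun s' => ratio_succ_left hu hlat s' t') s k
  refine det_casorati_eq_zero_of_recurrence (a := a) (p := ratio a u s) (fun i t' => ?_) t
  rw [add_two_eq_ratio_mul hu, ratio_indep]
end

section
/- When k = 1, the recurrence (x_{n+l+2} + x_{n+l} + a)·x_{n+1} = (x_{n+2} + x_n + a)·x_{n+l+1} is the total difference of the Extreme polynomial relation: namely, if x_{n+l+1}·x_n = x_{n+l}·x_{n+1} + a·(x_{n+1} + x_{n+2} + ... + x_{n+l}) + b holds for all n with some constant b, then (x_{n+l+2} + x_{n+l} + a)·x_{n+1} = (x_{n+2} + x_n + a)·x_{n+l+1} holds for all n. -/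
/-! Subtract the relation at `n` from the one at `n + 1`: the two windowed sums differ by
`x (n + l + 1) - x (n + 1)`, so the difference factors as the claimed identity. -/

open Finset

theorem sum_range_int_shift_add {M : Type*} [AddCommMonoid M] (f : ℤ → M) (m : ℤ) (l : ℕ) :
    ∑ i ∈ range l, f (m + 1 + i) + f m = ∑ i ∈ range l, f (m + i) + f (m + l) := by
  have hshift := sum_range_succ' (fun i : ℕ => f (m + i)) l
  rw [sum_range_succ] at hshift
  push_cast at hshift
  simp only [add_zero, add_assoc m 1, add_comm (1 : ℤ)] at hshift ⊢
  exact hshift.symm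

theorem extreme_total_difference_general {F : Type*} [Field F] (l : ℕ) (a b : F)
    (x : ℤ → F)
    (hrec : ∀ n : ℤ, x (n + l + 1) * x n
        = x (n + l) * x (n + 1) + a * (∑ i ∈ Finset.range l, x (n + 1 + i)) + b) :
    ∀ n : ℤ, (x (n + l + 2) + x (n + l) + a) * x (n + 1)
        = (x (n + 2) + x n + a) * x (n + l + 1) := by
  intro n
  have hsum := sum_range_int_shift_add x (n + 1) l
  have hnext := hrec (n + 1)
  rw [show n + 1 + l + 1 = n + l + 2 by ring] at hnext
  rw [show n + 1 + l = n + l + 1 by ring, show n + 1 + 1 = n + 2 by ring] at hnext hsum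
  linear_combination hnext - hrec n + a * hsum

theorem extreme_total_difference {F : Type*} [Field F] (l : ℕ) (hl : 0 < l) (a b : F)
    (x : ℤ → F)
    (hrec : ∀ n : ℤ, x (n + l + 1) * x n
        = x (n + l) * x (n + 1) + a * (∑ i ∈ Finset.range l, x (n + 1 + i)) + b) :
    ∀ n : ℤ, (x (n + l + 2) + x (n + l) + a) * x (n + 1)
        = (x (n + 2) + x n + a) * x (n + l + 1) :=
  extreme_total_difference_general l a b x hrec
end

section
/- Let (x_n) be a sequence of nonzero field elements satisfying the recurrence (x_{n+2k+l} + x_{n+l} + a)·x_{n+k} = (x_{n+2k} + x_n + a)·x_{n+k+l}. Then the quantity b_n := ∑_{j=0}^{k-1} (x_{n+j}·x_{n+j+k+l} − x_{n+j+k}·x_{n+j+l}) − a·∑_{j=0}^{l-1} x_{n+j+k} is a first integral: b_{n+1} = b_n for all n. -/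
/-! Shifting `n` to `n + 1` changes each window sum defining `b n` only by its two boundary terms,
and the resulting difference `b (n + 1) - b n` is exactly the recurrence at `n`. -/

open Finset

theorem Finset.sum_range_shift_sub_sum_range {M : Type*} [AddCommGroup M] (f : ℤ → M) (n : ℤ)
    (k : ℕ) :
    ∑ j ∈ range k, f (n + 1 + j) - ∑ j ∈ range k, f (n + j) = f (n + k) - f n := by
  rw [← sum_sub_distrib]
  simpa [add_right_comm _ (1 : ℤ), add_assoc] using sum_range_sub (fun j : ℕ => f (n + j)) k

theorem reduced_first_integral_general {F : Type*} [Field F] (k l : ℕ) (a : F)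
    (x : ℤ → F)
    (hrec : ∀ n : ℤ, (x (n + 2*k + l) + x (n + l) + a) * x (n + k)
        = (x (n + 2*k) + x n + a) * x (n + k + l))
    (b : ℤ → F)
    (hb : ∀ n, b n = (∑ j ∈ Finset.range k,
          (x (n + j) * x (n + j + k + l) - x (n + j + k) * x (n + j + l)))
        - a * ∑ j ∈ Finset.range l, x (n + j + k)) :
    ∀ n : ℤ, b (n + 1) = b n := by
  intro n
  have hquad := sum_range_shift_sub_sum_range
    (fun t => x t * x (t + k + l) - x (t + k) * x (t + l)) n k
  have hlin := sum_range_shift_sub_sum_range (fun t => x (t + k)) n l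
  simp only [show n + (k : ℤ) + k = n + 2 * k by ring, show n + (l : ℤ) + k = n + k + l by ring]
    at hquad hlin
  rw [hb, hb]
  linear_combination hquad - a * hlin + hrec n

theorem reduced_first_integral {F : Type*} [Field F] (k l : ℕ) (hk : 0 < k) (hl : 0 < l) (a : F)
    (x : ℤ → F) (hx : ∀ n, x n ≠ 0)
    (hrec : ∀ n : ℤ, (x (n + 2*k + l) + x (n + l) + a) * x (n + k)
        = (x (n + 2*k) + x n + a) * x (n + k + l))
    (b : ℤ → F)
    (hb : ∀ n, b n = (∑ j ∈ Finset.range k,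
          (x (n + j) * x (n + j + k + l) - x (n + j + k) * x (n + j + l)))
        - a * ∑ j ∈ Finset.range l, x (n + j + k)) :
    ∀ n : ℤ, b (n + 1) = b n :=
  reduced_first_integral_general k l a x hrec b hb
end

section
/- Let x_0, x_1, x_2 be positive rational numbers (or elements of the field ℚ(x_0,x_1,x_2)) and define x_n for n ≥ 3 by x_{n+3}·x_n = x_{n+2}·x_{n+1} + x_{n+2} + x_{n+1}. Then the quantity 𝒦_n := (x_{n+6} − x_n)/(x_{n+4} − x_{n+2}) is well-defined and independent of n, i.e., (x_{n+7} − x_{n+1})·(x_{n+4} − x_{n+2}) = (x_{n+6} − x_n)·(x_{n+5} − x_{n+3}) for all n ≥ 0. -/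
/-! Subtracting two consecutive instances of the recurrence shows that
`J m = (x m + x (m + 2) + 1) / x (m + 1)` satisfies `J (m + 2) = J m`. So `x` solves the linear
recurrence `x (m + 2) + x m + 1 = J m * x (m + 1)` with 2-periodic coefficients, and eliminating
the odd-indexed terms gives `x (m + 6) - x m = (J m * J (m + 1) - 1) * (x (m + 4) - x (m + 2))`,
where `J m * J (m + 1) = J 0 * J 1` does not depend on `m`: this constant minus one is `𝒦`. -/

section TwoPeriodic

variable {R : Type*} [CommRing R] {x J : ℕ → R}

theorem sub_six_eq_of_two_periodic (hJ : ∀ m, J (m + 2) = J m)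
    (hx : ∀ m, x (m + 2) + x m + 1 = J m * x (m + 1)) (m : ℕ) :
    x (m + 6) - x m = (J m * J (m + 1) - 1) * (x (m + 4) - x (m + 2)) := by
  have e0 := hx m
  have e1 := hx (m + 1)
  have e2 := hx (m + 2)
  have e3 := hx (m + 3)
  have e4 := hx (m + 4)
  rw [hJ] at e2
  rw [show m + 3 = m + 1 + 2 by ring, hJ] at e3
  rw [show m + 4 = m + 2 + 2 by ring, hJ, hJ] at e4
  simp only [add_assoc, Nat.reduceAdd] at e1 e2 e3 e4
  linear_combination J m * e3 + e4 - J m * e1 - e0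

theorem sub_mul_sub_eq_of_two_periodic (hJ : ∀ m, J (m + 2) = J m)
    (hx : ∀ m, x (m + 2) + x m + 1 = J m * x (m + 1)) (n : ℕ) :
    (x (n + 7) - x (n + 1)) * (x (n + 4) - x (n + 2))
      = (x (n + 6) - x n) * (x (n + 5) - x (n + 3)) := by
  have h0 := sub_six_eq_of_two_periodic hJ hx n
  have h1 := sub_six_eq_of_two_periodic hJ hx (n + 1)
  rw [hJ] at h1
  simp only [add_assoc, Nat.reduceAdd] at h1
  rw [h0, h1]
  ring

end TwoPeriodic

section LittlePi

variable {F : Type*} [Field F] {x : ℕ → F}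

theorem littlePi_mul_add_add_one
    (hmul : ∀ n, x (n + 3) * x n = x (n + 2) * x (n + 1) + x (n + 2) + x (n + 1)) (m : ℕ) :
    x (m + 1) * (x (m + 4) + x (m + 2) + 1) = x (m + 3) * (x m + x (m + 2) + 1) := by
  have h := hmul (m + 1)
  simp only [add_assoc, Nat.reduceAdd] at h
  linear_combination h - hmul m

def littlePiRatio (x : ℕ → F) (m : ℕ) : F := (x m + x (m + 2) + 1) / x (m + 1)

theorem littlePiRatio_add_two (hne : ∀ n, x n ≠ 0)
    (hmul : ∀ n, x (n + 3) * x n = x (n + 2) * x (n + 1) + x (n + 2) + x (n + 1)) (m : ℕ) :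
    littlePiRatio x (m + 2) = littlePiRatio x m := by
  simp only [littlePiRatio, add_assoc, Nat.reduceAdd]
  rw [div_eq_div_iff (hne _) (hne _)]
  linear_combination littlePi_mul_add_add_one hmul m

theorem add_add_one_eq_littlePiRatio_mul (hne : ∀ n, x n ≠ 0) (m : ℕ) :
    x (m + 2) + x m + 1 = littlePiRatio x m * x (m + 1) := by
  rw [littlePiRatio, div_mul_cancel₀ _ (hne _)]
  ring

end LittlePi

theorem littlePi_pos {F : Type*} [Field F] [LinearOrder F] [IsStrictOrderedRing F]
    {x : ℕ → F} (h0 : 0 < x 0) (h1 : 0 < x 1) (h2 : 0 < x 2)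
    (hrec : ∀ n : ℕ, x (n + 3) = (x (n + 2) * x (n + 1) + x (n + 2) + x (n + 1)) / x n) :
    ∀ n, 0 < x n
  | 0 => h0
  | 1 => h1
  | 2 => h2
  | n + 3 => by
    have := littlePi_pos h0 h1 h2 hrec n
    have := littlePi_pos h0 h1 h2 hrec (n + 1)
    have := littlePi_pos h0 h1 h2 hrec (n + 2)
    rw [hrec n]
    positivity

theorem simple_littlepi_K_invariant
    (x : ℕ → ℝ) (h0 : 0 < x 0) (h1 : 0 < x 1) (h2 : 0 < x 2)
    (hrec : ∀ n : ℕ, x (n + 3) = (x (n + 2) * x (n + 1) + x (n + 2) + x (n + 1)) / x n) :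
    ∀ n : ℕ, (x (n + 7) - x (n + 1)) * (x (n + 4) - x (n + 2))
        = (x (n + 6) - x n) * (x (n + 5) - x (n + 3)) := by
  have hne : ∀ n, x n ≠ 0 := fun n => (littlePi_pos h0 h1 h2 hrec n).ne'
  have hmul : ∀ n, x (n + 3) * x n = x (n + 2) * x (n + 1) + x (n + 2) + x (n + 1) :=
    fun n => by rw [hrec n, div_mul_cancel₀ _ (hne n)]
  exact sub_mul_sub_eq_of_two_periodic (littlePiRatio_add_two hne hmul)
    (add_add_one_eq_littlePiRatio_mul hne)
end

section
/- Let x_0, x_1, x_2 be positive reals and define x_n by the recurrence x_{n+3}·x_n = x_{n+2}·x_{n+1} + x_{n+2} + x_{n+1}. Then the quantity 𝒦 = P⁽⁰⁾ + P⁽¹⁾ + P⁽²⁾, where P⁽⁰⁾ = 1 + x_0/x_2 + x_2/x_0, P⁽¹⁾ = (1 + x_2/x_0)·(x_0+x_1)/(x_1·x_2) + (1 + x_0/x_2)·(x_1+x_2)/(x_0·x_1), P⁽²⁾ = 1/(x_1·x_2) + 1/(x_0·x_1) + 1/(x_0·x_2), satisfies x_6 − 𝒦·x_4 + 𝒦·x_2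 − x_0 = 0. -/
/-- The paper's first integral `𝒦 = P⁽⁰⁾ + P⁽¹⁾ + P⁽²⁾`, read off three consecutive terms. -/
noncomputable def firstIntegral (a b c : ℝ) : ℝ :=
  (1 + a / c + c / a)
    + ((1 + c / a) * (a + b) / (b * c) + (1 + a / c) * (b + c) / (a * b))
    + (1 / (b * c) + 1 / (a * b) + 1 / (a * c))

theorem recurrence_linear_relation (x : ℕ → ℝ)
    (hrec : ∀ n : ℕ, x (n + 3) = (x (n + 2) * x (n + 1) + x (n + 2) + x (n + 1)) / x n)
    (n : ℕ) (ha : 0 < x n) (hb : 0 < x (n + 1)) (hc : 0 < x (n + 2)) :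
    x (n + 6) - firstIntegral (x n) (x (n + 1)) (x (n + 2)) * x (n + 4)
      + firstIntegral (x n) (x (n + 1)) (x (n + 2)) * x (n + 2) - x n = 0 := by
  have e3 : x (n + 3) = (x (n + 2) * x (n + 1) + x (n + 2) + x (n + 1)) / x n := hrec n
  have e4 : x (n + 4) = (x (n + 3) * x (n + 2) + x (n + 3) + x (n + 2)) / x (n + 1) :=
    hrec (n + 1)
  have e5 : x (n + 5) = (x (n + 4) * x (n + 3) + x (n + 4) + x (n + 3)) / x (n + 2) :=
    hrec (n + 2)
  have e6 : x (n + 6) = (x (n + 5) * x (n + 4) + x (n + 5) + x (n + 4)) / x (n + 3) :=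
    hrec (n + 3)
  -- After substitution everything is a rational function of `x n, x (n+1), x (n+2)` whose
  -- denominators are positive, so `field_simp` can clear them.
  rw [firstIntegral, e6, e5, e4, e3]
  field_simp
  ring

theorem simple_littlepi_explicit_K
    (x : ℕ → ℝ) (h0 : 0 < x 0) (h1 : 0 < x 1) (h2 : 0 < x 2)
    (hrec : ∀ n : ℕ, x (n + 3) = (x (n + 2) * x (n + 1) + x (n + 2) + x (n + 1)) / x n)
    (𝒦 : ℝ)
    (h𝒦 : 𝒦 = (1 + x 0 / x 2 + x 2 / x 0)
        + ((1 + x 2 / x 0) * (x 0 + x 1) / (x 1 * x 2)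
            + (1 + x 0 / x 2) * (x 1 + x 2) / (x 0 * x 1))
        + (1 / (x 1 * x 2) + 1 / (x 0 * x 1) + 1 / (x 0 * x 2))) :
    x 6 - 𝒦 * x 4 + 𝒦 * x 2 - x 0 = 0 := by
  subst h𝒦
  exact recurrence_linear_relation x hrec 0 h0 h1 h2
end

section
/- For the recurrence x_{n+3}·x_n = x_{n+2}·x_{n+1} + x_{n+2} + x_{n+1} with positive initial values, every iterate x_n is a Laurent polynomial in x_0, x_1, x_2 with integer coefficients. -/
/-!
The quantity `K n = (x (n+2) + x n + 1) / x (n+1)` is `2`-periodic: clearing denominators,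
`K (n+2) = K n` is the difference of the recurrence at `n + 1` and at `n`. Hence
`x (n+2) = K n * x (n+1) - x n - 1` is a linear recurrence whose coefficients take only the two
values `K 0 = (x₂ + x₀ + 1) / x₁` and `K 1 = (x₃ + x₁ + 1) / x₂`, both Laurent polynomials, and
induction shows that every `x n` lies in any subring containing `x₀, x₁, x₂` and their inverses.
-/

open MvPolynomial
open scoped nonZeroDivisors

section Recurrence

variable {K : Type*} [Field K] {x : ℕ → K}

def linearizingCoeff (x : ℕ → K) (n : ℕ) : K := (x (n + 2) + x n + 1) / x (n + 1)

theorem eq_linearizingCoeff_mul_sub {n : ℕ} (hx : x (n + 1) ≠ 0) :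
    x (n + 2) = linearizingCoeff x n * x (n + 1) - x n - 1 := by
  rw [linearizingCoeff, div_mul_cancel₀ _ hx]
  ring

theorem linearizingCoeff_add_two (hx : ∀ n, x n ≠ 0)
    (hrec : ∀ n, x (n + 3) * x n = x (n + 2) * x (n + 1) + x (n + 2) + x (n + 1)) (n : ℕ) :
    linearizingCoeff x (n + 2) = linearizingCoeff x n := by
  rw [linearizingCoeff, linearizingCoeff, div_eq_div_iff (hx _) (hx _)]
  linear_combination hrec (n + 1) - hrec n

theorem linearizingCoeff_mod_two (hx : ∀ n, x n ≠ 0)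
    (hrec : ∀ n, x (n + 3) * x n = x (n + 2) * x (n + 1) + x (n + 2) + x (n + 1)) (n : ℕ) :
    linearizingCoeff x (n % 2) = linearizingCoeff x n := by
  induction n using Nat.strong_induction_on with
  | _ n ih =>
    rcases n with _ | _ | n
    · rfl
    · rfl
    · rw [show n + 1 + 1 = n + 2 from rfl, Nat.add_mod_right, ih n (by omega),
        linearizingCoeff_add_two hx hrec]

theorem mem_subring_of_initial_mem (hx : ∀ n, x n ≠ 0)
    (hrec : ∀ n, x (n + 3) * x n = x (n + 2) * x (n + 1) + x (n + 2) + x (n + 1)) (A : Subring K)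
    (hmem : ∀ i : Fin 3, x i ∈ A) (hinv : ∀ i : Fin 3, (x i)⁻¹ ∈ A) (n : ℕ) : x n ∈ A := by
  have h0 : x 0 ∈ A := hmem 0
  have h1 : x 1 ∈ A := hmem 1
  have h2 : x 2 ∈ A := hmem 2
  have h0' : (x 0)⁻¹ ∈ A := hinv 0
  have h1' : (x 1)⁻¹ ∈ A := hinv 1
  have h2' : (x 2)⁻¹ ∈ A := hinv 2
  have h3 : x 3 ∈ A := by
    rw [eq_div_of_mul_eq (hx 0) (hrec 0), div_eq_mul_inv]
    exact mul_mem (add_mem (add_mem (mul_mem h2 h1) h2) h1) h0'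
  have hcoeff (m : ℕ) : linearizingCoeff x m ∈ A := by
    rw [← linearizingCoeff_mod_two hx hrec]
    rcases Nat.mod_two_eq_zero_or_one m with h | h <;> rw [h, linearizingCoeff, div_eq_mul_inv]
    · exact mul_mem (add_mem (add_mem h2 h0) (one_mem A)) h1'
    · exact mul_mem (add_mem (add_mem h3 h1) (one_mem A)) h2'
  have hpair (m : ℕ) : x m ∈ A ∧ x (m + 1) ∈ A := by
    induction m with
    | zero => exact ⟨h0, h1⟩
    | succ m ih =>
      refine ⟨ih.2, ?_⟩
      rw [eq_linearizingCoeff_mul_sub (hx (m + 1))]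
      exact sub_mem (sub_mem (mul_mem (hcoeff m) ih.2) ih.1) (one_mem A)
  exact (hpair n).1

end Recurrence

section Laurent

variable (σ R : Type*) [CommRing R] [IsDomain R]

noncomputable abbrev monomials : Submonoid (MvPolynomial σ R) :=
  MonoidHom.mrange (monomialOneHom R σ)

theorem monomials_le_nonZeroDivisors : monomials σ R ≤ (MvPolynomial σ R)⁰ := by
  rintro _ ⟨d, rfl⟩
  exact mem_nonZeroDivisors_of_ne_zero (monomial_eq_zero.not.mpr one_ne_zero)

noncomputable abbrev laurent : Subalgebra (MvPolynomial σ R) (FractionRing (MvPolynomial σ R)) :=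
  Localization.subalgebra.ofField _ (monomials σ R) (monomials_le_nonZeroDivisors σ R)

variable {σ R}

theorem inv_X_mem_laurent (i : σ) :
    (algebraMap (MvPolynomial σ R) (FractionRing (MvPolynomial σ R)) (X i))⁻¹ ∈ laurent σ R :=
  ⟨1, X i, ⟨Multiplicative.ofAdd (Finsupp.single i 1), rfl⟩, by rw [map_one, one_mul]⟩

theorem exists_mul_monomial_eq_of_mem_laurent {f : FractionRing (MvPolynomial σ R)}
    (hf : f ∈ laurent σ R) : ∃ (p : MvPolynomial σ R) (d : σ →₀ ℕ),
      f * algebraMap _ _ (monomial d (1 : R)) = algebraMap _ _ p := by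
  obtain ⟨p, _, ⟨d, rfl⟩, rfl⟩ := hf
  exact ⟨p, d, inv_mul_cancel_right₀ (IsFractionRing.to_map_ne_zero_of_mem_nonZeroDivisors
    (monomials_le_nonZeroDivisors σ R ⟨d, rfl⟩)) _⟩

end Laurent

theorem monomial_one_eq_X_pow_mul_fin_three {R : Type*} [CommSemiring R] (d : Fin 3 →₀ ℕ) :
    monomial d (1 : R) = X 0 ^ d 0 * X 1 ^ d 1 * X 2 ^ d 2 := by
  rw [monomial_eq, C_1, one_mul, Finsupp.prod_fintype _ _ fun _ => pow_zero _,
    Fin.prod_univ_three]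

theorem simple_littlepi_laurent
    (x : ℕ → FractionRing (MvPolynomial (Fin 3) ℤ))
    (hinit : ∀ i : Fin 3, x i = algebraMap (MvPolynomial (Fin 3) ℤ) _ (MvPolynomial.X i))
    (hx : ∀ n, x n ≠ 0)
    (hrec : ∀ n : ℕ, x (n + 3) * x n = x (n + 2) * x (n + 1) + x (n + 2) + x (n + 1)) :
    ∀ n : ℕ, ∃ (p : MvPolynomial (Fin 3) ℤ) (a b c : ℕ),
      x n * algebraMap (MvPolynomial (Fin 3) ℤ) _
          (MvPolynomial.X 0 ^ a * MvPolynomial.X 1 ^ b * MvPolynomial.X 2 ^ c)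
        = algebraMap (MvPolynomial (Fin 3) ℤ) _ p := by
  intro n
  have hmem : x n ∈ laurent (Fin 3) ℤ :=
    mem_subring_of_initial_mem hx hrec (laurent (Fin 3) ℤ).toSubring
      (fun i => hinit i ▸ Subalgebra.algebraMap_mem _ _) (fun i => hinit i ▸ inv_X_mem_laurent i) n
  obtain ⟨p, d, hp⟩ := exists_mul_monomial_eq_of_mem_laurent hmem
  exact ⟨p, d 0, d 1, d 2, monomial_one_eq_X_pow_mul_fin_three (R := ℤ) d ▸ hp⟩
end
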